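/- arXiv:math/9704233 — 5 statements merged into one kernel-verified Lean document; each statement's English description precedes it below -/
import Mathlib

section
/- Let κ be an infinite cardinal, S a set with |S| > 2^κ, and f a coloring of the unordered pairs of S by a set of colors ι with |ι| ≤ κ. Then there exists a subset J ⊆ S with |J| ≥ κ⁺ (in particular, an infinite subset) all of whose pairs receive the same color. -/
/-!
Take `C ⊆ S` of size at most `2 ^ κ` which is saturated: every colour pattern `b ↦ f s(x, b)`
over a set `B ⊆ C` of size at most `κ`, realised by some `x ∉ B`, is already realised inside
`C \ B`; it exists because there are at most `κ ^ κ = 2 ^ κ` patterns over each `B` and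
`(2 ^ κ) ^ κ = 2 ^ κ`. Since `|S| > 2 ^ κ` there is `s ∉ C`, and transfinite recursion produces
a sequence `(x a)_{a < κ⁺}` in `C` in which every `x a` sees the earlier terms in the colours in
which `s` sees them. Then `f s(x a, x b)` depends only on the smaller index `b`, namely it is
`f s(s, x b)`, and by pigeonhole `κ⁺` indices share this colour.
-/

universe u

open Cardinal Order Set

theorem exists_fun_of_forall_image_Iio_exists {α β : Type*} [Preorder α] [WellFoundedLT α]
    [Nonempty β] (P : Set β → β → Prop)
    (h : ∀ (x : α → β) (a : α), (∀ b < a, P (x '' Iio b) (x b)) → ∃ y, P (x '' Iio a) y) :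
    ∃ x : α → β, ∀ a, P (x '' Iio a) (x a) := by
  let x : α → β := wellFounded_lt.fix fun a rec =>
    Classical.epsilon (P (range fun b : Iio a => rec b b.2))
  have hx : ∀ a, x a = Classical.epsilon (P (x '' Iio a)) := fun a => by
    rw [image_eq_range]
    exact wellFounded_lt.fix_eq _ a
  refine ⟨x, fun a => ?_⟩
  induction a using WellFoundedLT.induction with | _ a IH =>
  rw [hx a]
  exact Classical.epsilon_spec (h x a IH)

namespace Cardinal

theorem mk_iUnion_le_of_le {α ι : Type u} {f : ι → Set α} {c : Cardinal.{u}} (hc : ℵ₀ ≤ c)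
    (hι : #ι ≤ c) (hf : ∀ i, #(f i) ≤ c) : #(⋃ i, f i) ≤ c :=
  (mk_iUnion_le f).trans <| (mul_le_mul' hι (ciSup_le' hf)).trans (mul_eq_self hc).le

theorem mk_Iio_le_of_toType_succ_ord {κ : Cardinal.{u}} (a : (succ κ).ord.ToType) :
    #(Iio a) ≤ κ := by
  have h := mk_Iio_lt a (by rw [mk_toType, card_ord, Ordinal.type_toType])
  rw [mk_toType, card_ord] at h
  exact lt_succ_iff.1 h

theorem exists_forall_lt_of_mk_le {κ : Cardinal.{u}} (hκ : ℵ₀ ≤ κ)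
    {s : Set (succ κ).ord.ToType} (hs : #s ≤ κ) : ∃ a, ∀ b ∈ s, b < a := by
  refine not_isCofinal_iff.1 fun hcof => (lt_succ κ).not_ge ?_
  calc succ κ = Order.cof (succ κ).ord.ToType := by
        rw [Ordinal.cof_toType, (isRegular_succ hκ).cof_ord]
    _ ≤ #s := Order.cof_le hcof
    _ ≤ κ := hs

/-- `C` is the union of a chain of length `κ⁺`; it catches every set of size `κ` because `κ⁺` is
regular. -/
theorem exists_closed_of_power_le {α : Type u} {κ μ : Cardinal.{u}} (hκ : ℵ₀ ≤ κ) (hκμ : κ < μ)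
    (hμ : μ ^ κ ≤ μ) (F : Set α → Set α) (hF : ∀ B : Set α, #B ≤ κ → #(F B) ≤ μ) :
    ∃ C : Set α, #C ≤ μ ∧ ∀ B ⊆ C, #B ≤ κ → F B ⊆ C := by
  have hμ₀ : ℵ₀ ≤ μ := hκ.trans hκμ.le
  have hstep : ∀ U : Set α, #U ≤ μ → #(⋃ B : {B : Set α // B ⊆ U ∧ #B ≤ κ}, F B.1) ≤ μ :=
    fun U hU => mk_iUnion_le_of_le hμ₀
      ((mk_bounded_subset_le U κ).trans ((power_le_power_right (max_le hU hμ₀)).trans hμ))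
      fun B => hF B.1 B.2.2
  obtain ⟨D, hD⟩ := exists_fun_of_forall_image_Iio_exists (α := (succ κ).ord.ToType)
    (fun prev E => (∀ B ⊆ ⋃₀ prev, #B ≤ κ → F B ⊆ E) ∧ #E ≤ μ) fun D a IH => by
      refine ⟨_, fun B hB hBκ => subset_iUnion_of_subset ⟨B, hB, hBκ⟩ subset_rfl, hstep _ ?_⟩
      rw [sUnion_image, biUnion_eq_iUnion]
      exact mk_iUnion_le_of_le hμ₀ ((mk_Iio_le_of_toType_succ_ord a).trans hκμ.le)
        fun b => (IH b b.2).2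
  refine ⟨⋃ a, D a, mk_iUnion_le_of_le hμ₀ ?_ fun a => (hD a).2, fun B hB hBκ => ?_⟩
  · rw [mk_toType, card_ord]
    exact succ_le_of_lt hκμ
  choose a ha using fun b : B => mem_iUnion.1 (hB b.2)
  obtain ⟨a₀, ha₀⟩ := exists_forall_lt_of_mk_le hκ (mk_range_le.trans hBκ : #(range a) ≤ κ)
  refine ((hD a₀).1 B (fun b hb => ?_) hBκ).trans (subset_iUnion D a₀)
  exact mem_sUnion_of_mem (ha ⟨b, hb⟩) ⟨_, ha₀ _ (mem_range_self _), rfl⟩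

end Cardinal

namespace ErdosRado

variable {S ι : Type u} (f : Sym2 S → ι) (κ : Cardinal.{u})

def IsSaturated (C : Set S) : Prop :=
  ∀ B ⊆ C, #B ≤ κ → ∀ x ∉ B, ∃ y ∈ C, y ∉ B ∧ ∀ b ∈ B, f s(y, b) = f s(x, b)

variable {f κ}

theorem exists_isSaturated (hκ : ℵ₀ ≤ κ) (hι : #ι ≤ κ) :
    ∃ C : Set S, #C ≤ 2 ^ κ ∧ IsSaturated f κ C := by
  -- `R B` picks one realisation outside `B` of each colour pattern over `B`.
  choose R hRB hR using fun B : Set S => exists_subset_bijOn Bᶜ fun x (b : B) => f s(x, b)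
  have hRcard : ∀ B : Set S, #B ≤ κ → #(R B) ≤ 2 ^ κ := fun B hB => calc
    #(R B) = #((fun x (b : B) => f s(x, b)) '' R B) :=
        (mk_image_eq_of_injOn _ _ (hR B).injOn).symm
    _ ≤ #ι ^ #B := (power_def ι B).symm ▸ mk_set_le _
    _ ≤ κ ^ κ :=
        (power_le_power_right hι).trans (power_le_power_left (aleph0_pos.trans_le hκ).ne' hB)
    _ = 2 ^ κ := power_self_eq hκ
  have hpow : ((2 : Cardinal) ^ κ) ^ κ ≤ 2 ^ κ := by rw [← power_mul, mul_eq_self hκ]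
  obtain ⟨C, hC, hCR⟩ := exists_closed_of_power_le hκ (cantor κ) hpow R hRcard
  refine ⟨C, hC, fun B hBC hB x hx => ?_⟩
  obtain ⟨y, hy, hyx⟩ := (hR B).surjOn ⟨x, hx, rfl⟩
  exact ⟨y, hCR B hBC hB hy, hRB B hy, fun b hb => congrFun hyx ⟨b, hb⟩⟩

theorem exists_seq_forall_lt_color_eq {α : Type u} [LinearOrder α] [WellFoundedLT α]
    (hα : ∀ a : α, #(Iio a) ≤ κ) {C : Set S} (hC : IsSaturated f κ C) {s : S} (hs : s ∉ C) :
    ∃ x : α → S, Function.Injective x ∧ ∀ a b, b < a → f s(x a, x b) = f s(s, x b) := by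
  have : Nonempty S := ⟨s⟩
  obtain ⟨x, hx⟩ := exists_fun_of_forall_image_Iio_exists
    (fun B y => y ∈ C ∧ y ∉ B ∧ ∀ b ∈ B, f s(y, b) = f s(s, b)) fun x a IH => by
      refine hC _ ?_ (mk_image_le.trans (hα a)) s fun hsB => hs ?_
      · rintro _ ⟨b, hb, rfl⟩
        exact (IH b hb).1
      · obtain ⟨b, hb, rfl⟩ := hsB
        exact (IH b hb).1
  refine ⟨x, Function.Injective.of_lt_imp_ne fun b a hba => ?_, fun a b hba => ?_⟩
  · exact fun h => (hx a).2.1 ⟨b, hba, h⟩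
  · exact (hx a).2.2 _ (mem_image_of_mem x hba)

end ErdosRado

open ErdosRado in
/-- Erdős–Rado: if `|S| > 2^κ` for infinite `κ` and pairs of `S` are coloured by
at most `κ` colours, there is a monochromatic subset of size at least `κ⁺`. -/
theorem erdos_rado_pairs (κ : Cardinal.{u}) (hκ : Cardinal.aleph0 ≤ κ)
    (S ι : Type u) (hS : 2 ^ κ < Cardinal.mk S) (hι : Cardinal.mk ι ≤ κ)
    (f : Sym2 S → ι) :
    ∃ J : Set S, Order.succ κ ≤ Cardinal.mk J ∧
      ∃ c : ι, ∀ x ∈ J, ∀ y ∈ J, x ≠ y → f s(x, y) = c := by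
  obtain ⟨C, hCcard, hC⟩ := exists_isSaturated (f := f) hκ hι
  obtain ⟨s, hs⟩ : ∃ s, s ∉ C := by
    by_contra! hCS
    exact (hCcard.trans_lt hS).ne (by rw [eq_univ_of_forall hCS, mk_univ])
  obtain ⟨x, hxinj, hx⟩ := exists_seq_forall_lt_color_eq (α := (succ κ).ord.ToType)
    mk_Iio_le_of_toType_succ_ord hC hs
  obtain ⟨c, hc⟩ := infinite_pigeonhole_card (fun a => f s(s, x a)) (succ κ)
    (by rw [mk_toType, card_ord]) (hκ.trans (le_succ κ))
    (by rw [(isRegular_succ hκ).cof_ord]; exact hι.trans_lt (lt_succ κ))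
  refine ⟨x '' _, (mk_image_eq hxinj).symm ▸ hc, c, ?_⟩
  rintro _ ⟨a, ha, rfl⟩ _ ⟨b, hb, rfl⟩ hab
  rcases lt_or_gt_of_ne (ne_of_apply_ne x hab) with h | h
  · rw [Sym2.eq_swap, hx b a h]
    exact ha
  · rw [hx a b h]
    exact hb
end

section
/- (Schlichting's theorem) Let G be a group and 𝔉 a nonempty family of subgroups of G such that there exists n < ω with [F : F ∩ F'] ≤ n for all F, F' ∈ 𝔉. Then there is a subgroup N of G that is commensurable with every member of 𝔉, with the indices [N : N ∩ F] and [F : N ∩ F] bounded independently of F ∈ 𝔉, and such that N is invariant under every automorphism of G that stabilizes 𝔉 setwise. -/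
/-!
Among the subgroups `K` commensurable with every member of `𝔉`, minimize
`d(K) = max_{F ∈ 𝔉} [K : K ∩ F]` (`maxRelIndex`) and let `N` be the join of all minimizers.
Minimizers are closed under `⊓`. If `C` is the meet of finitely many minimizers and `F₁ ∈ 𝔉`
attains `d(C)`, each of them has the same image as `C` in `G ⧸ F₁`, so their join stabilizes that
image and meets at most `d(C)` cosets of `F₁`. Such bounds survive directed joins, so `N` is
uniformly commensurable with `𝔉`. An automorphism `σ` with `σ 𝔉 ⊆ 𝔉` maps `N` to the canonical
subgroup of `σ 𝔉`, which contains `N`; as `[σ^k N : N] = [σ N : N]^k` stays bounded, `σ N = N`.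
-/

open Subgroup Pointwise

namespace Subgroup

variable {G G' : Type*} [Group G] [Group G']

theorem relIndex_le_relIndex_mul_relIndex {H K L : Subgroup G} (hHK : H.relIndex K ≠ 0)
    (hKL : K.relIndex L ≠ 0) : H.relIndex L ≤ H.relIndex K * K.relIndex L := by
  have hHKL : H.relIndex (K ⊓ L) ≠ 0 := fun h ↦ hHK (relIndex_eq_zero_of_le_right inf_le_left h)
  calc H.relIndex L ≤ (H ⊓ K).relIndex L := by
        refine relIndex_le_of_le_left inf_le_left ?_
        rw [← relIndex_inf_mul_relIndex]
        exact mul_ne_zero hHKL hKL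
    _ = H.relIndex (K ⊓ L) * K.relIndex L := (relIndex_inf_mul_relIndex H K L).symm
    _ ≤ H.relIndex K * K.relIndex L :=
        Nat.mul_le_mul_right _ (relIndex_le_of_le_right inf_le_left hHK)

theorem relIndex_mapSubgroup (e : G ≃* G') (H K : Subgroup G) :
    (e.mapSubgroup H).relIndex (e.mapSubgroup K) = H.relIndex K :=
  relIndex_map_map_of_injective H K e.injective

theorem ncard_image_mk_eq_relIndex (F K : Subgroup G) :
    (QuotientGroup.mk '' (K : Set G) : Set (G ⧸ F)).ncard = F.relIndex K := by
  have hsmul (k : K) : k • (QuotientGroup.mk 1 : G ⧸ F) = QuotientGroup.mk (k : G) := by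
    change (k : G) • (QuotientGroup.mk 1 : G ⧸ F) = _
    rw [MulAction.Quotient.smul_mk, smul_eq_mul, mul_one]
  have hstab : MulAction.stabilizer K (QuotientGroup.mk 1 : G ⧸ F) = F.subgroupOf K := by
    ext k
    simp [MulAction.mem_stabilizer_iff, mem_subgroupOf, hsmul, QuotientGroup.eq]
  have horbit : MulAction.orbit K (QuotientGroup.mk 1 : G ⧸ F) =
      QuotientGroup.mk '' (K : Set G) := by
    ext x
    simp [MulAction.mem_orbit_iff, hsmul]
  rw [relIndex, ← hstab, MulAction.index_stabilizer, horbit]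

theorem relIndex_le_ncard_of_image_mk_subset {F K : Subgroup G} {Ω : Set (G ⧸ F)}
    (hΩ : Ω.Finite) (hKΩ : QuotientGroup.mk '' (K : Set G) ⊆ Ω) :
    F.relIndex K ≤ Ω.ncard ∧ F.relIndex K ≠ 0 := by
  rw [← ncard_image_mk_eq_relIndex]
  exact ⟨Set.ncard_le_ncard hKΩ hΩ,
    ((Set.ncard_pos (hΩ.subset hKΩ)).2 ⟨_, 1, K.one_mem, rfl⟩).ne'⟩

theorem image_mk_eq_of_le_of_relIndex_le {F K L : Subgroup G} (hKL : K ≤ L)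
    (hL : F.relIndex L ≠ 0) (hLK : F.relIndex L ≤ F.relIndex K) :
    (QuotientGroup.mk '' (L : Set G) : Set (G ⧸ F)) = QuotientGroup.mk '' (K : Set G) := by
  rw [← ncard_image_mk_eq_relIndex, ← ncard_image_mk_eq_relIndex] at hLK
  rw [← ncard_image_mk_eq_relIndex] at hL
  exact (Set.eq_of_subset_of_ncard_le (Set.image_mono hKL) hLK
    (Set.finite_of_ncard_ne_zero hL)).symm

theorem le_stabilizer_image_mk (F K : Subgroup G) :
    K ≤ MulAction.stabilizer G (QuotientGroup.mk '' (K : Set G) : Set (G ⧸ F)) := by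
  intro k hk
  rw [MulAction.mem_stabilizer_iff, ← Set.image_smul_comm QuotientGroup.mk k _ fun _ ↦ rfl,
    smul_coe_set hk]

theorem image_mk_stabilizer_subset {F : Subgroup G} {Ω : Set (G ⧸ F)}
    (hΩ : (QuotientGroup.mk 1 : G ⧸ F) ∈ Ω) :
    QuotientGroup.mk '' (MulAction.stabilizer G Ω : Set G) ⊆ Ω := by
  rintro _ ⟨g, hg, rfl⟩
  have : g • (QuotientGroup.mk 1 : G ⧸ F) ∈ g • Ω := Set.smul_mem_smul_set hΩ
  rwa [MulAction.mem_stabilizer_iff.mp hg, MulAction.Quotient.smul_mk, smul_eq_mul,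
    mul_one] at this

/-- Along a directed family, the image in `G ⧸ F` stabilizes once its size is maximal. -/
theorem relIndex_sSup_le_of_directedOn {F : Subgroup G} {𝒦 : Set (Subgroup G)}
    (hne : 𝒦.Nonempty) (hdir : DirectedOn (· ≤ ·) 𝒦) {m : ℕ}
    (h𝒦 : ∀ K ∈ 𝒦, F.relIndex K ≤ m ∧ F.relIndex K ≠ 0) :
    F.relIndex (sSup 𝒦) ≤ m ∧ F.relIndex (sSup 𝒦) ≠ 0 := by
  have hbdd : BddAbove ((F.relIndex ·) '' 𝒦) := ⟨m, by rintro _ ⟨K, hK, rfl⟩; exact (h𝒦 K hK).1⟩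
  obtain ⟨K₀, hK₀, hK₀max⟩ := Nat.sSup_mem (hne.image _) hbdd
  have hmax : ∀ K ∈ 𝒦, F.relIndex K ≤ F.relIndex K₀ :=
    fun K hK ↦ (le_csSup hbdd ⟨K, hK, rfl⟩).trans_eq hK₀max.symm
  have hsub : QuotientGroup.mk '' ((sSup 𝒦 : Subgroup G) : Set G) ⊆
      (QuotientGroup.mk '' (K₀ : Set G) : Set (G ⧸ F)) := by
    rintro _ ⟨g, hg, rfl⟩
    obtain ⟨K, hK, hgK⟩ := (mem_sSup_of_directedOn hne hdir).mp hg
    obtain ⟨L, hL, hK₀L, hKL⟩ := hdir K₀ hK₀ K hK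
    rw [← image_mk_eq_of_le_of_relIndex_le hK₀L (h𝒦 L hL).2 (hmax L hL)]
    exact ⟨g, hKL hgK, rfl⟩
  have hfin : (QuotientGroup.mk '' (K₀ : Set G) : Set (G ⧸ F)).Finite := by
    apply Set.finite_of_ncard_ne_zero
    rw [ncard_image_mk_eq_relIndex]
    exact (h𝒦 K₀ hK₀).2
  obtain ⟨hle, hne'⟩ := relIndex_le_ncard_of_image_mk_subset hfin hsub
  rw [ncard_image_mk_eq_relIndex] at hle
  exact ⟨hle.trans (h𝒦 K₀ hK₀).1, hne'⟩

theorem mapSubgroup_mul_apply (σ τ : MulAut G) (H : Subgroup G) :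
    MulEquiv.mapSubgroup (σ * τ) H = MulEquiv.mapSubgroup σ (MulEquiv.mapSubgroup τ H) :=
  (map_map H σ.toMonoidHom τ.toMonoidHom).symm

theorem mapSubgroup_one_apply (H : Subgroup G) : MulEquiv.mapSubgroup (1 : MulAut G) H = H :=
  map_id H

theorem mapSubgroup_eq_of_le_of_relIndex_le (σ : MulAut G) {H : Subgroup G} {c : ℕ}
    (hle : H ≤ MulEquiv.mapSubgroup σ H) (hfin : H.relIndex (MulEquiv.mapSubgroup σ H) ≠ 0)
    (hbdd : ∀ k, H.relIndex (MulEquiv.mapSubgroup (σ ^ k) H) ≤ c) :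
    MulEquiv.mapSubgroup σ H = H := by
  set t := H.relIndex (MulEquiv.mapSubgroup σ H)
  have hpow (k : ℕ) :
      H ≤ MulEquiv.mapSubgroup (σ ^ k) H ∧ H.relIndex (MulEquiv.mapSubgroup (σ ^ k) H) = t ^ k := by
    induction k with
    | zero => simp only [pow_zero, mapSubgroup_one_apply, relIndex_self, le_refl, and_self]
    | succ k ih =>
      have hstep : MulEquiv.mapSubgroup (σ ^ k) H ≤ MulEquiv.mapSubgroup (σ ^ (k + 1)) H := by
        rw [pow_succ, mapSubgroup_mul_apply]
        exact (MulEquiv.mapSubgroup (σ ^ k)).monotone hle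
      refine ⟨ih.1.trans hstep, ?_⟩
      rw [← relIndex_mul_relIndex _ _ _ ih.1 hstep, ih.2, pow_succ, pow_succ,
        mapSubgroup_mul_apply, relIndex_mapSubgroup]
  have ht : t = 1 := by
    by_contra ht
    have : c < t ^ c := Nat.lt_pow_self (by omega)
    exact (this.trans_le ((hpow c).2 ▸ hbdd c)).false
  exact le_antisymm (relIndex_eq_one.mp ht) hle

end Subgroup

namespace Schlichting

variable {G : Type*} [Group G]

def UniformlyCommensurable (S : Set (Subgroup G)) (n : ℕ) : Prop :=
  ∀ F ∈ S, ∀ F' ∈ S, F'.relIndex F ≤ n ∧ F'.relIndex F ≠ 0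

def commClass (S : Set (Subgroup G)) : Set (Subgroup G) :=
  {K | ∀ F ∈ S, K.Commensurable F}

noncomputable def maxRelIndex (S : Set (Subgroup G)) (K : Subgroup G) : ℕ :=
  sSup ((·.relIndex K) '' S)

noncomputable def minMaxRelIndex (S : Set (Subgroup G)) : ℕ :=
  sInf (maxRelIndex S '' commClass S)

def optimalSubgroups (S : Set (Subgroup G)) : Set (Subgroup G) :=
  {K | K ∈ commClass S ∧ maxRelIndex S K ≤ minMaxRelIndex S}

noncomputable def canonicalSubgroup (S : Set (Subgroup G)) : Subgroup G :=
  sSup (optimalSubgroups S)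

section UniformlyCommensurable

variable {S : Set (Subgroup G)} {n : ℕ} {F K L : Subgroup G}

theorem inf_mem_commClass (hK : K ∈ commClass S) (hL : L ∈ commClass S) :
    K ⊓ L ∈ commClass S := by
  intro F hF
  have hinf : (K ⊓ L).Commensurable K :=
    ⟨by rw [inf_relIndex_left]; exact ((hK F hF).trans (hL F hF).symm).2,
      by rw [relIndex_eq_one.mpr inf_le_left]; exact one_ne_zero⟩
  exact hinf.trans (hK F hF)

theorem minMaxRelIndex_le (hK : K ∈ commClass S) : minMaxRelIndex S ≤ maxRelIndex S K :=
  Nat.sInf_le ⟨K, hK, rfl⟩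

variable (hS : UniformlyCommensurable S n)
include hS

theorem mem_commClass (hF : F ∈ S) : F ∈ commClass S :=
  fun F' hF' ↦ ⟨(hS F' hF' F hF).2, (hS F hF F' hF').2⟩

theorem relIndex_le_mul_of_relIndex_le {F₁ : Subgroup G} (hF₁ : F₁ ∈ S) {m : ℕ}
    (hK : F₁.relIndex K ≤ m ∧ F₁.relIndex K ≠ 0) (hF : F ∈ S) :
    F.relIndex K ≤ n * m ∧ F.relIndex K ≠ 0 :=
  ⟨(relIndex_le_relIndex_mul_relIndex (hS F₁ hF₁ F hF).2 hK.2).trans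
      (Nat.mul_le_mul (hS F₁ hF₁ F hF).1 hK.1),
    relIndex_ne_zero_trans (hS F₁ hF₁ F hF).2 hK.2⟩

theorem bddAbove_relIndex_image (hK : K ∈ commClass S) : BddAbove ((·.relIndex K) '' S) := by
  rcases S.eq_empty_or_nonempty with rfl | ⟨F₁, hF₁⟩
  · simp
  refine ⟨n * F₁.relIndex K, ?_⟩
  rintro _ ⟨F, hF, rfl⟩
  exact (relIndex_le_mul_of_relIndex_le hS hF₁ ⟨le_rfl, (hK F₁ hF₁).2⟩ hF).1

theorem relIndex_le_maxRelIndex (hK : K ∈ commClass S) (hF : F ∈ S) :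
    F.relIndex K ≤ maxRelIndex S K :=
  le_csSup (bddAbove_relIndex_image hS hK) ⟨F, hF, rfl⟩

theorem exists_relIndex_eq_maxRelIndex (hne : S.Nonempty) (hK : K ∈ commClass S) :
    ∃ F ∈ S, F.relIndex K = maxRelIndex S K :=
  Nat.sSup_mem (hne.image _) (bddAbove_relIndex_image hS hK)

theorem maxRelIndex_le_of_subset {T : Set (Subgroup G)} (hTS : T ⊆ S) (hT : T.Nonempty)
    (hK : K ∈ commClass S) : maxRelIndex T K ≤ maxRelIndex S K :=
  csSup_le_csSup (bddAbove_relIndex_image hS hK) (hT.image _) (Set.image_mono hTS)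

theorem maxRelIndex_mono (hne : S.Nonempty) (hKL : K ≤ L) (hL : L ∈ commClass S) :
    maxRelIndex S K ≤ maxRelIndex S L := by
  refine csSup_le (hne.image _) ?_
  rintro _ ⟨F, hF, rfl⟩
  exact (relIndex_le_of_le_right hKL (hL F hF).2).trans (relIndex_le_maxRelIndex hS hL hF)

theorem optimalSubgroups_nonempty (hne : S.Nonempty) : (optimalSubgroups S).Nonempty := by
  obtain ⟨F, hF⟩ := hne
  obtain ⟨K, hK, hmin⟩ :=
    Nat.sInf_mem (s := maxRelIndex S '' commClass S) ⟨_, F, mem_commClass hS hF, rfl⟩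
  exact ⟨K, hK, hmin.le⟩

theorem infClosed_optimalSubgroups (hne : S.Nonempty) : InfClosed (optimalSubgroups S) :=
  fun _ hK _ hL ↦ ⟨inf_mem_commClass hK.1 hL.1,
    (maxRelIndex_mono hS hne inf_le_left hK.1).trans hK.2⟩

theorem exists_relIndex_sup'_le (hne : S.Nonempty) {t : Finset (Subgroup G)} (htne : t.Nonempty)
    (ht : ∀ K ∈ t, K ∈ optimalSubgroups S) :
    ∃ F₁ ∈ S, F₁.relIndex (t.sup' htne id) ≤ minMaxRelIndex S ∧
      F₁.relIndex (t.sup' htne id) ≠ 0 := by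
  set C₀ := t.inf' htne id
  have hC₀ : C₀ ∈ optimalSubgroups S := (infClosed_optimalSubgroups hS hne).finsetInf'_mem htne ht
  obtain ⟨F₁, hF₁, hF₁C₀⟩ := exists_relIndex_eq_maxRelIndex hS hne hC₀.1
  have htight : F₁.relIndex C₀ = minMaxRelIndex S :=
    hF₁C₀.trans (le_antisymm hC₀.2 (minMaxRelIndex_le hC₀.1))
  have hstab : t.sup' htne id ≤
      MulAction.stabilizer G (QuotientGroup.mk '' (C₀ : Set G) : Set (G ⧸ F₁)) := by
    refine Finset.sup'_le _ _ fun K hK ↦ ?_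
    have hKF₁ : F₁.relIndex K ≤ F₁.relIndex C₀ :=
      htight ▸ (relIndex_le_maxRelIndex hS (ht K hK).1 hF₁).trans (ht K hK).2
    rw [← image_mk_eq_of_le_of_relIndex_le (Finset.inf'_le id hK) ((ht K hK).1 F₁ hF₁).2 hKF₁]
    exact le_stabilizer_image_mk F₁ K
  have hfin : (QuotientGroup.mk '' (C₀ : Set G) : Set (G ⧸ F₁)).Finite := by
    apply Set.finite_of_ncard_ne_zero
    rw [ncard_image_mk_eq_relIndex]
    exact (hC₀.1 F₁ hF₁).2
  have hJ := relIndex_le_ncard_of_image_mk_subset hfin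
    ((Set.image_mono hstab).trans (image_mk_stabilizer_subset ⟨1, C₀.one_mem, rfl⟩))
  rw [ncard_image_mk_eq_relIndex, htight] at hJ
  exact ⟨F₁, hF₁, hJ⟩

theorem relIndex_canonicalSubgroup_le (hne : S.Nonempty) (hF : F ∈ S) :
    F.relIndex (canonicalSubgroup S) ≤ n * minMaxRelIndex S ∧
      F.relIndex (canonicalSubgroup S) ≠ 0 := by
  rw [canonicalSubgroup, ← (isLUB_supClosure.mpr (isLUB_sSup (optimalSubgroups S))).sSup_eq]
  refine relIndex_sSup_le_of_directedOn ((optimalSubgroups_nonempty hS hne).mono subset_supClosure)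
    supClosed_supClosure.directedOn ?_
  rintro _ ⟨t, htne, ht, rfl⟩
  obtain ⟨F₁, hF₁, hJ⟩ := exists_relIndex_sup'_le hS hne htne ht
  exact relIndex_le_mul_of_relIndex_le hS hF₁ hJ hF

theorem exists_canonicalSubgroup_relIndex_le (hne : S.Nonempty) :
    ∃ c, ∀ F ∈ S, (canonicalSubgroup S).relIndex F ≤ c ∧ (canonicalSubgroup S).relIndex F ≠ 0 := by
  obtain ⟨F₀, hF₀⟩ := hne
  obtain ⟨K₀, hK₀⟩ := optimalSubgroups_nonempty hS ⟨F₀, hF₀⟩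
  have hK₀N : K₀ ≤ canonicalSubgroup S := le_sSup hK₀
  refine ⟨K₀.relIndex F₀ * n, fun F hF ↦ ⟨?_, ?_⟩⟩
  · calc (canonicalSubgroup S).relIndex F ≤ K₀.relIndex F :=
          relIndex_le_of_le_left hK₀N (hK₀.1 F hF).1
      _ ≤ K₀.relIndex F₀ * F₀.relIndex F :=
          relIndex_le_relIndex_mul_relIndex (hK₀.1 F₀ hF₀).1 (hS F hF F₀ hF₀).2
      _ ≤ K₀.relIndex F₀ * n := Nat.mul_le_mul_left _ (hS F hF F₀ hF₀).1
  · exact fun h ↦ (hK₀.1 F hF).1 (relIndex_eq_zero_of_le_left hK₀N h)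

theorem canonicalSubgroup_le_of_subset {T : Set (Subgroup G)} (hTS : T ⊆ S) (hT : T.Nonempty)
    (hmin : minMaxRelIndex S ≤ minMaxRelIndex T) : canonicalSubgroup S ≤ canonicalSubgroup T :=
  sSup_le_sSup fun _ hK ↦ ⟨fun F hF ↦ hK.1 F (hTS hF),
    (maxRelIndex_le_of_subset hS hTS hT hK.1).trans (hK.2.trans hmin)⟩

end UniformlyCommensurable

section Transport

variable {G' : Type*} [Group G'] (e : G ≃* G') (S : Set (Subgroup G))

theorem maxRelIndex_image_mapSubgroup (K : Subgroup G) :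
    maxRelIndex (e.mapSubgroup '' S) (e.mapSubgroup K) = maxRelIndex S K := by
  simp only [maxRelIndex, Set.image_image, relIndex_mapSubgroup]

theorem mapSubgroup_mem_commClass_iff {K : Subgroup G} :
    e.mapSubgroup K ∈ commClass (e.mapSubgroup '' S) ↔ K ∈ commClass S := by
  simp only [commClass, Commensurable, Set.mem_ofPred_eq, Set.forall_mem_image,
    relIndex_mapSubgroup]

theorem commClass_image_mapSubgroup :
    commClass (e.mapSubgroup '' S) = e.mapSubgroup '' commClass S := by
  ext K
  rw [← e.mapSubgroup.apply_symm_apply K, mapSubgroup_mem_commClass_iff,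
    e.mapSubgroup.injective.mem_set_image]

theorem minMaxRelIndex_image_mapSubgroup :
    minMaxRelIndex (e.mapSubgroup '' S) = minMaxRelIndex S := by
  rw [minMaxRelIndex, commClass_image_mapSubgroup, Set.image_image]
  simp only [maxRelIndex_image_mapSubgroup, minMaxRelIndex]

theorem optimalSubgroups_image_mapSubgroup :
    optimalSubgroups (e.mapSubgroup '' S) = e.mapSubgroup '' optimalSubgroups S := by
  ext K
  rw [← e.mapSubgroup.apply_symm_apply K, e.mapSubgroup.injective.mem_set_image]
  simp only [optimalSubgroups, Set.mem_ofPred_eq, mapSubgroup_mem_commClass_iff,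
    maxRelIndex_image_mapSubgroup, minMaxRelIndex_image_mapSubgroup]

theorem canonicalSubgroup_image_mapSubgroup :
    canonicalSubgroup (e.mapSubgroup '' S) = e.mapSubgroup (canonicalSubgroup S) := by
  rw [canonicalSubgroup, optimalSubgroups_image_mapSubgroup, sSup_image, canonicalSubgroup,
    OrderIso.map_sSup]

end Transport

section Invariance

variable {S : Set (Subgroup G)} {n : ℕ}

theorem mapSubgroup_pow_image_subset (σ : MulAut G) (hσ : σ.mapSubgroup '' S ⊆ S) (k : ℕ) :
    MulEquiv.mapSubgroup (σ ^ k) '' S ⊆ S := by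
  induction k with
  | zero =>
    rintro _ ⟨F, hF, rfl⟩
    rwa [pow_zero, mapSubgroup_one_apply]
  | succ k ih =>
    rintro _ ⟨F, hF, rfl⟩
    rw [pow_succ, mapSubgroup_mul_apply]
    exact ih ⟨_, hσ ⟨F, hF, rfl⟩, rfl⟩

variable (hS : UniformlyCommensurable S n)
include hS

theorem relIndex_mapSubgroup_pow_le (σ : MulAut G) (hσ : σ.mapSubgroup '' S ⊆ S)
    {F₀ H : Subgroup G} (hF₀ : F₀ ∈ S) (hH : H.Commensurable F₀) (k : ℕ) :
    H.relIndex (MulEquiv.mapSubgroup (σ ^ k) H) ≤ H.relIndex F₀ * (n * F₀.relIndex H) ∧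
      H.relIndex (MulEquiv.mapSubgroup (σ ^ k) H) ≠ 0 := by
  have hFk : MulEquiv.mapSubgroup (σ ^ k) F₀ ∈ S :=
    mapSubgroup_pow_image_subset σ hσ k ⟨F₀, hF₀, rfl⟩
  obtain ⟨hle, hne⟩ := relIndex_le_mul_of_relIndex_le hS hFk
    (m := F₀.relIndex H) (by rw [relIndex_mapSubgroup]; exact ⟨le_rfl, hH.2⟩) hF₀
  exact ⟨(relIndex_le_relIndex_mul_relIndex hH.1 hne).trans (Nat.mul_le_mul_left _ hle),
    relIndex_ne_zero_trans hH.1 hne⟩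

theorem mapSubgroup_canonicalSubgroup (hne : S.Nonempty) (σ : MulAut G)
    (hσ : σ.mapSubgroup '' S ⊆ S) :
    σ.mapSubgroup (canonicalSubgroup S) = canonicalSubgroup S := by
  obtain ⟨F₀, hF₀⟩ := hne
  obtain ⟨c, hc⟩ := exists_canonicalSubgroup_relIndex_le hS ⟨F₀, hF₀⟩
  have hN : (canonicalSubgroup S).Commensurable F₀ :=
    ⟨(hc F₀ hF₀).2, (relIndex_canonicalSubgroup_le hS ⟨F₀, hF₀⟩ hF₀).2⟩
  have hbdd := relIndex_mapSubgroup_pow_le hS σ hσ hF₀ hN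
  refine mapSubgroup_eq_of_le_of_relIndex_le σ ?_ (by simpa only [pow_one] using (hbdd 1).2)
    fun k ↦ (hbdd k).1
  rw [← canonicalSubgroup_image_mapSubgroup]
  exact canonicalSubgroup_le_of_subset hS hσ ⟨_, F₀, hF₀, rfl⟩
    (minMaxRelIndex_image_mapSubgroup σ S).ge

end Invariance

end Schlichting

open Schlichting in
/-- Schlichting's theorem: if `𝔉` is a nonempty family of subgroups of `G` with
`[F : F ∩ F'] ≤ n` for all `F, F' ∈ 𝔉`, then there is a subgroup `N`
commensurable with every member of `𝔉`, with indices bounded independently of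
the member, and invariant under every automorphism of `G` stabilizing `𝔉`. -/
theorem schlichting (G : Type*) [Group G] (𝔉 : Set (Subgroup G)) (h𝔉 : 𝔉.Nonempty)
    (n : ℕ)
    (hbd : ∀ F ∈ 𝔉, ∀ F' ∈ 𝔉, F'.relIndex F ≤ n ∧ F'.relIndex F ≠ 0) :
    ∃ N : Subgroup G, ∃ m : ℕ,
      (∀ F ∈ 𝔉, F.relIndex N ≤ m ∧ F.relIndex N ≠ 0 ∧
        N.relIndex F ≤ m ∧ N.relIndex F ≠ 0) ∧
      (∀ σ : G ≃* G, (∀ F ∈ 𝔉, F.map σ.toMonoidHom ∈ 𝔉) →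
        N.map σ.toMonoidHom = N) := by
  obtain ⟨c, hc⟩ := exists_canonicalSubgroup_relIndex_le hbd h𝔉
  refine ⟨canonicalSubgroup 𝔉, max (n * minMaxRelIndex 𝔉) c, fun F hF ↦ ?_,
    fun σ hσ ↦ mapSubgroup_canonicalSubgroup hbd h𝔉 σ (Set.image_subset_iff.mpr hσ)⟩
  obtain ⟨hFN, hFN'⟩ := relIndex_canonicalSubgroup_le hbd h𝔉 hF
  obtain ⟨hNF, hNF'⟩ := hc F hF
  exact ⟨hFN.trans (le_max_left _ _), hFN', hNF.trans (le_max_right _ _), hNF'⟩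
end

section
/- Let G be a group, H a subgroup of G, and (Eᵢ)_{i∈I} a family of equivalence relations on G such that for all x, y ∈ G: x·y⁻¹ ∈ H if and only if Eᵢ(x, y) holds for all i ∈ I. Then H = ⋂_{i∈I} Hᵢ, where Hᵢ := {g ∈ G : ∀x ∈ G, Eᵢ(x, g·x)}; moreover each Hᵢ is a subgroup of G containing H. -/
/-- If `H ≤ G` and `(Eᵢ)` are equivalence relations on `G` such that
`x * y⁻¹ ∈ H ↔ ∀ i, Eᵢ x y`, then `H = ⋂ᵢ Hᵢ` where
`Hᵢ = {g | ∀ x, Eᵢ x (g * x)}`, and each `Hᵢ` is a subgroup containing `H`. -/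
theorem subgroup_eq_iInter_of_equiv (G : Type*) [Group G] (H : Subgroup G)
    (I : Type*) (E : I → G → G → Prop) (hE : ∀ i, Equivalence (E i))
    (hH : ∀ x y : G, x * y⁻¹ ∈ H ↔ ∀ i, E i x y) :
    (H : Set G) = ⋂ i, {g : G | ∀ x : G, E i x (g * x)} ∧
    ∀ i, ∃ Hi : Subgroup G,
      (Hi : Set G) = {g : G | ∀ x : G, E i x (g * x)} ∧ H ≤ Hi := by
  have key : ∀ g x : G, g ∈ H ↔ ∀ i, E i x (g * x) := by
    intro g x
    have h1 : x * (g * x)⁻¹ = g⁻¹ := by group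
    constructor
    · intro hg i
      exact (hH x (g * x)).mp (by rw [h1]; exact inv_mem hg) i
    · intro h
      have := (hH x (g * x)).mpr h
      rw [h1] at this
      simpa using inv_mem this
  constructor
  · ext g
    simp only [Set.mem_iInter, Set.mem_setOf_eq, SetLike.mem_coe]
    constructor
    · intro hg i x; exact (key g x).mp hg i
    · intro h; exact (key g 1).mpr (fun i => h i 1)
  · intro i
    refine ⟨{ carrier := {g : G | ∀ x : G, E i x (g * x)}
              one_mem' := by intro x; simpa using (hE i).refl x
              mul_mem' := ?_
              inv_mem' := ?_ }, rfl, ?_⟩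
    · intro a b ha hb x
      have h1 : E i x (b * x) := hb x
      have h2 : E i (b * x) (a * (b * x)) := ha (b * x)
      have := (hE i).trans h1 h2
      simpa [mul_assoc] using this
    · intro a ha x
      have := ha (a⁻¹ * x)
      rw [mul_inv_cancel_left] at this
      exact (hE i).symm this
    · intro g hg x
      exact (key g x).mp hg i
end

section
/- Let G be a group and for g ∈ G set H_g := {(h, g⁻¹hg) : h ∈ G}, a subgroup of G × G. Then for g, g' ∈ G, the subgroups H_g and H_{g'} are commensurable if and only if the centralizer C_G(g'·g⁻¹) has finite index in G. -/
/-! `H_g` is the graph of the automorphism `h ↦ g⁻¹ h g`, i.e. the image of `G` under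
`h ↦ (h, g⁻¹ h g)`. Pulling `H_{g'}` back along this map gives the set of `h` on which the two
conjugations agree, which is the centralizer of `g' g⁻¹`; so `[H_g : H_g ∩ H_{g'}]` is the index of
that centralizer. Symmetrically `[H_{g'} : H_g ∩ H_{g'}]` is the index of the centralizer of
`g g'⁻¹ = (g' g⁻¹)⁻¹`, which is the same subgroup. -/

/-- The graph of conjugation by `g`, a subgroup of `G × G`. -/
def conjGraph {G : Type*} [Group G] (g : G) : Subgroup (G × G) where
  carrier := {p : G × G | p.2 = g⁻¹ * p.1 * g}
  one_mem' := by simp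
  mul_mem' := by
    rintro ⟨a, b⟩ ⟨c, d⟩ hab hcd
    simp only [Set.mem_setOf_eq] at *
    subst hab; subst hcd
    simp only [Prod.fst_mul, Prod.snd_mul]
    group
  inv_mem' := by
    rintro ⟨a, b⟩ hab
    simp only [Set.mem_setOf_eq] at *
    subst hab
    simp only [Prod.fst_inv, Prod.snd_inv]
    group


theorem MonoidHom.relIndex_graph {G H : Type*} [Group G] [Group H] (f f' : G →* H) :
    f'.graph.relIndex f.graph = (f'.eqLocus f).index := by
  rw [graph_eq_range_prod f, ← Subgroup.index_comap]
  rfl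

theorem Subgroup.centralizer_singleton_inv {G : Type*} [Group G] (x : G) :
    centralizer {x⁻¹} = centralizer {x} := by
  rw [← centralizer_closure, closure_singleton_inv, centralizer_closure]

theorem MulAut.eqLocus_conj {G : Type*} [Group G] (a b : G) :
    (conj a).toMonoidHom.eqLocus (conj b).toMonoidHom = Subgroup.centralizer {a⁻¹ * b} := by
  ext h
  show a * h * a⁻¹ = b * h * b⁻¹ ↔ h ∈ Subgroup.centralizer {a⁻¹ * b}
  rw [Subgroup.mem_centralizer_singleton_iff, eq_comm, mul_inv_eq_iff_eq_mul]
  simp only [mul_assoc]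
  rw [← inv_mul_eq_iff_eq_mul, eq_comm]

theorem conjGraph_eq_graph {G : Type*} [Group G] (g : G) :
    conjGraph g = (MulAut.conj g⁻¹).toMonoidHom.graph := by
  ext p
  simp [conjGraph, MonoidHom.mem_graph, eq_comm]

theorem conjGraph_relIndex {G : Type*} [Group G] (g g' : G) :
    (conjGraph g').relIndex (conjGraph g) = (Subgroup.centralizer {g' * g⁻¹}).index := by
  rw [conjGraph_eq_graph, conjGraph_eq_graph, MonoidHom.relIndex_graph, MulAut.eqLocus_conj,
    inv_inv]

/-- `H_g = {(h, g⁻¹hg) : h ∈ G}` and `H_{g'}` are commensurable subgroups of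
`G × G` iff the centralizer of `g' * g⁻¹` has finite index in `G`. -/
theorem conjGraph_commensurable_iff (G : Type*) [Group G] (g g' : G) :
    Subgroup.Commensurable (conjGraph g) (conjGraph g') ↔
      (Subgroup.centralizer {g' * g⁻¹}).index ≠ 0 := by
  have hinv : g * g'⁻¹ = (g' * g⁻¹)⁻¹ := by group
  rw [Subgroup.Commensurable, conjGraph_relIndex, conjGraph_relIndex, hinv,
    Subgroup.centralizer_singleton_inv, and_self]
end

section
/- Let G be a group and define H_g := {(h, g⁻¹hg) : h ∈ G} ≤ G × G for g ∈ G, and Z* := {g ∈ G : [G : C_G(g)] < ∞}. Then the map g ↦ H_g induces a well-defined injection from the coset space G/Z* into the set of commensurability classes of subgroups of G × G; i.e., H_g and H_{g'} are commensurable if and only if gZ* = g'Z*. -/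
/-!
The map `h ↦ (g h g⁻¹, h)` is an isomorphism of `G` onto `H_g`, under which `H_g ∩ H_{g'}`
corresponds to the centralizer of `g'⁻¹ g`. Hence `[H_g : H_g ∩ H_{g'}] = [G : C_G(g'⁻¹ g)]`, so
`H_g` and `H_{g'}` are commensurable iff `g'⁻¹ g ∈ Z*`; since `Z*` is a subgroup, this says
`g Z* = g' Z*`.
-/

open scoped Pointwise

namespace Subgroup

variable {G : Type*} [Group G]

theorem centralizer_singleton_inv_s10 (x : G) : centralizer {x⁻¹} = centralizer {x} := by
  ext h
  simp only [mem_centralizer_singleton_iff]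
  exact Commute.inv_right_iff

theorem centralizer_singleton_inf_le_mul (x y : G) :
    centralizer {x} ⊓ centralizer {y} ≤ centralizer {x * y} := by
  intro h hh
  obtain ⟨hx, hy⟩ := mem_inf.mp hh
  rw [mem_centralizer_singleton_iff] at hx hy ⊢
  exact (Commute.mul_left hx.symm hy.symm).symm

variable (G) in
/-- The FC-center of `G`: the elements with only finitely many conjugates. -/
def fcCenter : Subgroup G where
  carrier := {x | (centralizer {x}).index ≠ 0}
  one_mem' := by
    rw [Set.mem_setOf_eq, centralizer_eq_top_iff_subset.mpr (by simp), index_top]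
    exact one_ne_zero
  mul_mem' {x y} hx hy := ne_zero_of_dvd_ne_zero (index_inf_ne_zero hx hy)
    (index_dvd_of_le (centralizer_singleton_inf_le_mul x y))
  inv_mem' {x} hx := by simpa only [Set.mem_setOf_eq, centralizer_singleton_inv_s10] using hx

theorem mem_fcCenter {x : G} : x ∈ fcCenter G ↔ (centralizer {x}).index ≠ 0 := Iff.rfl

theorem coe_fcCenter : (fcCenter G : Set G) = {x | (centralizer {x}).index ≠ 0} := rfl

end Subgroup

section ConjGraph

open Subgroup

variable {G : Type*} [Group G]

theorem mem_conjGraph {g : G} {p : G × G} : p ∈ conjGraph g ↔ p.2 = g⁻¹ * p.1 * g := Iff.rfl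

/-- `h ↦ (g h g⁻¹, h)`. Parametrizing by the second coordinate makes the preimage of
`conjGraph g'` the centralizer of `g'⁻¹ g` itself rather than of a conjugate of it. -/
def conjGraphParam (g : G) : G →* G × G := (MulAut.conj g).toMonoidHom.prod (MonoidHom.id G)

theorem range_conjGraphParam (g : G) : (conjGraphParam g).range = conjGraph g := by
  ext ⟨a, b⟩
  simp only [MonoidHom.mem_range, conjGraphParam, MonoidHom.prod_apply, MonoidHom.id_apply,
    MulEquiv.coe_toMonoidHom, MulAut.conj_apply, Prod.mk.injEq, mem_conjGraph]
  constructor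
  · rintro ⟨h, rfl, rfl⟩
    group
  · rintro rfl
    exact ⟨_, by group, rfl⟩

theorem comap_conjGraphParam_conjGraph (g g' : G) :
    (conjGraph g').comap (conjGraphParam g) = centralizer {g'⁻¹ * g} := by
  ext h
  simp only [mem_comap, mem_conjGraph, mem_centralizer_singleton_iff, conjGraphParam,
    MonoidHom.prod_apply, MonoidHom.id_apply, MulEquiv.coe_toMonoidHom, MulAut.conj_apply]
  rw [show g'⁻¹ * (g * h * g⁻¹) * g' = g'⁻¹ * g * h * (g'⁻¹ * g)⁻¹ by group,
    eq_mul_inv_iff_mul_eq]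

theorem relIndex_conjGraph (g g' : G) :
    (conjGraph g').relIndex (conjGraph g) = (centralizer {g'⁻¹ * g}).index := by
  rw [← comap_conjGraphParam_conjGraph, index_comap, range_conjGraphParam]

end ConjGraph

/-- The map `g ↦ H_g` induces a well-defined injection from the coset space
`G/Z*` into the commensurability classes of subgroups of `G × G`:
`H_g` and `H_{g'}` are commensurable iff `g Z* = g' Z*`, where `Z*` is the
FC-center `{x : G | [G : C_G(x)] < ∞}`. -/
theorem conjGraph_commensurable_iff_coset_eq (G : Type*) [Group G] (g g' : G) :
    Subgroup.Commensurable (conjGraph g) (conjGraph g') ↔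
      g • {x : G | (Subgroup.centralizer {x}).index ≠ 0} =
        g' • {x : G | (Subgroup.centralizer {x}).index ≠ 0} := by
  rw [← Subgroup.coe_fcCenter, leftCoset_eq_iff, Subgroup.Commensurable,
    relIndex_conjGraph, relIndex_conjGraph, ← Subgroup.mem_fcCenter, ← Subgroup.mem_fcCenter,
    ← inv_mem_iff (x := g'⁻¹ * g), mul_inv_rev, inv_inv, and_self]
end
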